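/- Let h = (h_n)_{n≥0} ∈ ℋ. Then the even part h_N = (h_{2n})_{n≥0} and the odd part h_D = (h_{2n+1})_{n≥0} both belong to ℋ, and the difference sequence Δh = (h_{2n} − h_{2n+1})_{n≥0} belongs to ℓ²_{3/4}. -/

import Mathlib

open MeasureTheory Filter Finset

/-- `E_m = (2m)! / (2^(2m) (m!)^2)`, the Taylor coefficients of `(1-z)^(-1/2)`. -/
noncomputable def Ecoef (m : ℕ) : ℝ :=
  (Nat.factorial (2*m)) / (2^(2*m) * (Nat.factorial m)^2)

/-- Membership in the weighted space `ℓ²_r`:  `∑ (1+n)^(2r) |c_n|² < ∞`. -/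
def InEll2 (r : ℝ) (c : ℕ → ℝ) : Prop :=
  Summable (fun n : ℕ => ((1:ℝ) + n) ^ (2*r) * (c n)^2)

/-- The norm of the weighted space `ℓ²_r`. -/
noncomputable def ell2Norm (r : ℝ) (c : ℕ → ℝ) : ℝ :=
  Real.sqrt (∑' n : ℕ, ((1:ℝ) + n) ^ (2*r) * (c n)^2)

/-- Membership in the space `ℋ`: `h_n = ∑_{k=0}^n E_{n-k} f_k` for some `f ∈ ℓ²_{3/4}`. -/
def InH (h : ℕ → ℝ) : Prop :=
  ∃ f : ℕ → ℝ, InEll2 (3/4) f ∧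
    ∀ n, h n = ∑ k ∈ Finset.range (n+1), Ecoef (n-k) * f k

/-- Membership in the subspace `ℋ₀ ⊂ ℋ`: the representing sequence additionally satisfies
`∑ f_k = 0` (the series converges absolutely). -/
def InH0 (h : ℕ → ℝ) : Prop :=
  ∃ f : ℕ → ℝ, InEll2 (3/4) f ∧ Summable (fun k => |f k|) ∧ (∑' k, f k) = 0 ∧
    ∀ n, h n = ∑ k ∈ Finset.range (n+1), Ecoef (n-k) * f k

-- The norm `‖h‖_ℋ = ‖f‖_{ℓ²_{3/4}}` of `h ∈ ℋ`, via its (unique) representing sequence.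
open scoped Classical in
noncomputable def Hnorm (h : ℕ → ℝ) : ℝ :=
  if hh : InH h then ell2Norm (3/4) (Classical.choose hh) else 0


lemma Ecoef_pos (m : ℕ) : 0 < Ecoef m := by unfold Ecoef; positivity
lemma Ecoef_zero : Ecoef 0 = 1 := by simp [Ecoef]
lemma Erec (m : ℕ) : (2*(m:ℝ)+2) * Ecoef (m+1) = (2*m+1) * Ecoef m := by
  unfold Ecoef
  have h1 : 2*(m+1) = 2*m+1+1 := by ring
  rw [h1, Nat.factorial_succ, Nat.factorial_succ, Nat.factorial_succ]
  have h2 : (Nat.factorial (2*m) : ℝ) ≠ 0 := by positivity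
  have h3 : (Nat.factorial m : ℝ) ≠ 0 := by positivity
  push_cast; field_simp; ring

lemma Ecoef_succ (m : ℕ) : Ecoef (m+1) = (2*m+1)/(2*m+2) * Ecoef m := by
  have := Erec m
  have h : (2*(m:ℝ)+2) ≠ 0 := by positivity
  field_simp at this ⊢
  linarith [this]

lemma Ecoef_sq (m : ℕ) : Ecoef m ^ 2 * (m+1) ≤ 1 := by
  induction m with
  | zero => simp [Ecoef_zero]
  | succ m ih =>
    rw [Ecoef_succ]
    have hE := Ecoef_pos m
    have key : ((2*(m:ℝ)+1)/(2*m+2))^2 * ((m:ℝ)+1+1) ≤ ((m:ℝ)+1) := by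
      rw [div_pow, div_mul_eq_mul_div, div_le_iff₀ (by positivity)]
      nlinarith [sq_nonneg ((m:ℝ))]
    calc ((2*(m:ℝ)+1)/(2*m+2) * Ecoef m)^2 * ((m+1:ℕ)+1)
        = Ecoef m ^2 * (((2*(m:ℝ)+1)/(2*m+2))^2 * ((m:ℝ)+1+1)) := by push_cast; ring
      _ ≤ Ecoef m ^2 * ((m:ℝ)+1) := by
          apply mul_le_mul_of_nonneg_left key (by positivity)
      _ ≤ 1 := by exact_mod_cast ih

/-- coefficients of (1+z)^{1/2} -/
noncomputable def ucoef : ℕ → ℝ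
  | 0 => 1
  | (k+1) => (-1)^(k+1) * (Ecoef (k+1) - Ecoef k)

/-- A m = ∑_{2i≤m} E_i E_{m-2i} -/
noncomputable def Aseq (m : ℕ) : ℝ := ∑ i ∈ range (m/2+1), Ecoef i * Ecoef (m - 2*i)
noncomputable def Pseq (m : ℕ) : ℝ := ∑ k ∈ range (m+1), (-1)^k * Ecoef k
noncomputable def Useq (m : ℕ) : ℝ := ∑ i ∈ range (m/2+1), (2*i : ℝ) * (Ecoef i * Ecoef (m - 2*i))
noncomputable def Vseq (m : ℕ) : ℝ := ∑ i ∈ range (m/2+1), ((m:ℝ) - 2*i) * (Ecoef i * Ecoef (m - 2*i))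

lemma UV (m : ℕ) : Useq m + Vseq m = m * Aseq m := by
  unfold Useq Vseq Aseq
  rw [← Finset.sum_add_distrib, Finset.mul_sum]
  apply Finset.sum_congr rfl
  intro i _
  ring

-- L3 : (m+1) * A (m+1) = U (m+1) + V (m+1)
lemma L3 (m : ℕ) : ((m:ℝ)+1) * Aseq (m+1) = Useq (m+1) + Vseq (m+1) := by
  unfold Useq Vseq Aseq
  rw [← Finset.sum_add_distrib, Finset.mul_sum]
  apply Finset.sum_congr rfl
  intro i _
  push_cast
  ring

lemma stepV (M i : ℕ) (h2i : 2*i ≤ M) :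
    ((((M+1:ℕ)):ℝ) - 2*i) * (Ecoef i * Ecoef ((M+1) - 2*i))
      = ((M:ℝ) - 2*i) * (Ecoef i * Ecoef (M - 2*i)) + 1/2 * (Ecoef i * Ecoef (M - 2*i)) := by
  have hj : M + 1 - 2*i = (M - 2*i) + 1 := by omega
  rw [hj]
  have key := Erec (M - 2*i)
  rw [Nat.cast_sub h2i] at key
  push_cast at key ⊢
  linear_combination (Ecoef i / 2) * key

lemma L2 (m : ℕ) : Vseq (m+1) = Vseq m + (1/2) * Aseq m := by
  unfold Vseq Aseq
  rw [Finset.mul_sum, ← Finset.sum_add_distrib]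
  rcases Nat.even_or_odd m with ⟨t, rfl⟩ | ⟨t, rfl⟩
  · have hr : (t+t+1)/2 = (t+t)/2 := by omega
    rw [hr]
    refine Finset.sum_congr rfl (fun i hi => ?_)
    rw [mem_range] at hi
    exact stepV (t+t) i (by omega)
  · have hr : (2*t+1+1)/2 + 1 = ((2*t+1)/2 + 1) + 1 := by omega
    rw [hr, Finset.sum_range_succ]
    have h1 : (2*t+1)/2 + 1 = t + 1 := by omega
    have hz : ((((2*t+1+1:ℕ)):ℝ) - 2*((2*t+1)/2 + 1 : ℕ)) = 0 := by
      rw [h1]; push_cast; ring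
    rw [hz, zero_mul, add_zero]
    refine Finset.sum_congr rfl (fun i hi => ?_)
    rw [mem_range] at hi
    exact stepV (2*t+1) i (by omega)

lemma L1 (m : ℕ) : Useq (m+2) = Useq m + Aseq m := by
  unfold Useq Aseq
  have hr : (m+2)/2 + 1 = (m/2 + 1) + 1 := by omega
  rw [hr, Finset.sum_range_succ']
  rw [← Finset.sum_add_distrib]
  have hz : (2*((0:ℕ)):ℝ) * (Ecoef 0 * Ecoef (m + 2 - 2*0)) = 0 := by norm_num
  rw [hz, add_zero]
  refine Finset.sum_congr rfl (fun i hi => ?_)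
  rw [mem_range] at hi
  have h2i : 2*i ≤ m := by omega
  have hj : m + 2 - 2*(i+1) = m - 2*i := by omega
  rw [hj]
  have key := Erec i
  push_cast
  linear_combination Ecoef (m - 2*i) * key

lemma Ecoef_one : Ecoef 1 = 1/2 := by
  have := Erec 0
  rw [Ecoef_zero] at this
  push_cast at this
  linarith

lemma Arec (m : ℕ) : 2*((m:ℝ)+2) * Aseq (m+2) = Aseq (m+1) + (2*m+3) * Aseq m := by
  have h3 := L3 (m+1)
  have h1 := L1 m
  have h2 := L2 (m+1)
  have h2' := L2 m
  have huv := UV m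
  push_cast at h3
  linarith

lemma Psucc (m : ℕ) : Pseq (m+1) = Pseq m + (-1)^(m+1) * Ecoef (m+1) := by
  unfold Pseq; rw [Finset.sum_range_succ]

lemma Prec (m : ℕ) : 2*((m:ℝ)+2) * Pseq (m+2) = Pseq (m+1) + (2*m+3) * Pseq m := by
  have e1 := Psucc (m+1)
  have e2 := Psucc m
  have key := Erec (m+1)
  push_cast at key
  have hs : ((-1:ℝ))^(m+2) = -((-1:ℝ))^(m+1) := by rw [pow_succ]; ring
  rw [e1, e2, hs]
  push_cast
  linear_combination (-(-1:ℝ)^(m+1)) * key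

lemma AP : ∀ m, Aseq m = Pseq m ∧ Aseq (m+1) = Pseq (m+1) := by
  intro m
  induction m with
  | zero =>
    constructor
    · unfold Aseq Pseq; simp [Ecoef_zero]
    · unfold Aseq Pseq
      norm_num [Finset.sum_range_succ, Ecoef_zero, Ecoef_one]
  | succ m ih =>
    obtain ⟨ih1, ih2⟩ := ih
    refine ⟨ih2, ?_⟩
    have hA := Arec m
    have hP := Prec m
    rw [ih1, ih2] at hA
    have hne : (2*((m:ℝ)+2)) ≠ 0 := by positivity
    have : 2*((m:ℝ)+2) * Aseq (m+2) = 2*((m:ℝ)+2) * Pseq (m+2) := by rw [hA, hP]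
    exact mul_left_cancel₀ hne this

lemma Adiff (m : ℕ) : Aseq (m+1) - Aseq m = (-1)^(m+1) * Ecoef (m+1) := by
  rw [(AP m).1, (AP m).2, Psucc]; ring

lemma negpow (a b : ℕ) (h : 2*b ≤ a) : ((-1:ℝ))^(a - 2*b) = (-1)^a := by
  have ha : a = (a - 2*b) + 2*b := by omega
  conv_rhs => rw [ha]
  rw [pow_add, pow_mul]
  norm_num

lemma Skey (m : ℕ) : ∑ i ∈ range (m/2+1), Ecoef i * ucoef (m - 2*i) = Ecoef m := by
  cases m with
  | zero => simp [ucoef, Ecoef_zero]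
  | succ M =>
    have main : ∑ i ∈ range ((M+1)/2+1), Ecoef i * ucoef (M+1 - 2*i)
        = (-1)^(M+1) * (Aseq (M+1) - Aseq M) := by
      have hterm : ∀ i, 2*i ≤ M →
          Ecoef i * ucoef (M+1 - 2*i)
            = (-1)^(M+1) * (Ecoef i * Ecoef (M+1 - 2*i) - Ecoef i * Ecoef (M - 2*i)) := by
        intro i hi
        have hj : M + 1 - 2*i = (M - 2*i) + 1 := by omega
        rw [hj]
        show Ecoef i * ((-1)^((M - 2*i)+1) * (Ecoef ((M-2*i)+1) - Ecoef (M-2*i)))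
            = _
        have hs : ((-1:ℝ))^((M - 2*i)+1) = (-1)^(M+1) := by
          rw [pow_succ, negpow M i hi, ← pow_succ]
        rw [hs]; ring
      rcases Nat.even_or_odd M with ⟨t, rfl⟩ | ⟨t, rfl⟩
      · -- M = t+t, M+1 odd : (M+1)/2 = t = M/2
        have hr : (t+t+1)/2 = t := by omega
        have hr2 : (t+t)/2 = t := by omega
        rw [hr]
        unfold Aseq
        rw [hr, hr2, mul_sub, Finset.mul_sum, Finset.mul_sum, ← Finset.sum_sub_distrib]
        refine Finset.sum_congr rfl (fun i hi => ?_)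
        rw [mem_range] at hi
        rw [hterm i (by omega)]
        ring
      · -- M = 2t+1, M+1 = 2t+2 even: (M+1)/2 = t+1, M/2 = t
        have hr : (2*t+1+1)/2 = t+1 := by omega
        have hr2 : (2*t+1)/2 = t := by omega
        rw [hr]
        unfold Aseq
        rw [hr, hr2]
        rw [Finset.sum_range_succ, Finset.sum_range_succ (f := fun i => Ecoef i * Ecoef (2*t+1+1 - 2*i))]
        have h0 : 2*t+1+1 - 2*(t+1) = 0 := by omega
        rw [h0]
        have heven : ((-1:ℝ))^(2*t+1+1) = 1 := by
          rw [pow_succ, pow_succ, pow_mul]; norm_num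
        rw [heven, one_mul, show ucoef 0 = 1 from rfl, mul_one]
        have hsum : ∑ x ∈ range (t+1), Ecoef x * ucoef (2*t+1+1 - 2*x)
            = ∑ x ∈ range (t+1), (Ecoef x * Ecoef (2*t+1+1 - 2*x) - Ecoef x * Ecoef (2*t+1 - 2*x)) := by
          refine Finset.sum_congr rfl (fun i hi => ?_)
          rw [mem_range] at hi
          rw [hterm i (by omega), heven, one_mul]
        rw [hsum, Finset.sum_sub_distrib, Ecoef_zero]
        ring
    rw [main, Adiff]
    rw [← mul_assoc, ← pow_add]
    have : ((-1:ℝ))^((M+1)+(M+1)) = 1 := by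
      rw [← two_mul, pow_mul]; norm_num
    rw [this, one_mul]

lemma innerSumU (n r j : ℕ) (hr : r ≤ 1) (hj : j ≤ 2*n + r) :
    ∑ k ∈ range (n+1), (if j ≤ 2*k + r then Ecoef (n - k) * ucoef (2*k + r - j) else 0)
      = Ecoef (2*n + r - j) := by
  set m := 2*n + r - j with hm
  rw [← Finset.sum_range_reflect]
  have step : ∀ k ∈ range (n+1),
      (if j ≤ 2*(n + 1 - 1 - k) + r then Ecoef (n - (n + 1 - 1 - k)) * ucoef (2*(n + 1 - 1 - k) + r - j) else 0)
        = (if k ≤ m/2 then Ecoef k * ucoef (m - 2*k) else 0) := by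
    intro k hk
    rw [mem_range] at hk
    have h1 : n + 1 - 1 - k = n - k := by omega
    rw [h1]
    by_cases hc : j ≤ 2*(n-k) + r
    · rw [if_pos hc, if_pos (by omega)]
      have h2 : n - (n - k) = k := by omega
      have h3 : 2*(n - k) + r - j = m - 2*k := by omega
      rw [h2, h3]
    · rw [if_neg hc, if_neg (by omega)]
  rw [Finset.sum_congr rfl step]
  rw [← Skey m]
  symm
  calc ∑ i ∈ range (m/2+1), Ecoef i * ucoef (m - 2*i)
      = ∑ i ∈ range (m/2+1), (if i ≤ m/2 then Ecoef i * ucoef (m - 2*i) else 0) := by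
        refine Finset.sum_congr rfl (fun i hi => ?_)
        rw [mem_range] at hi
        rw [if_pos (by omega)]
    _ = ∑ i ∈ range (n+1), (if i ≤ m/2 then Ecoef i * ucoef (m - 2*i) else 0) := by
        apply Finset.sum_subset (Finset.range_subset_range.2 (by omega))
        intro i _ hni
        rw [mem_range] at hni
        exact if_neg (by omega)

lemma rep (n r : ℕ) (hr : r ≤ 1) (f : ℕ → ℝ) :
    ∑ k ∈ range (n+1), Ecoef (n - k) * (∑ j ∈ range (2*k + r + 1), ucoef (2*k + r - j) * f j)
      = ∑ j ∈ range (2*n + r + 1), Ecoef (2*n + r - j) * f j := by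
  have expand : ∀ k ∈ range (n+1),
      Ecoef (n - k) * (∑ j ∈ range (2*k + r + 1), ucoef (2*k + r - j) * f j)
        = ∑ j ∈ range (2*n + r + 1),
            (if j ≤ 2*k + r then Ecoef (n - k) * ucoef (2*k + r - j) else 0) * f j := by
    intro k hk
    rw [mem_range] at hk
    rw [Finset.mul_sum]
    have h1 : ∑ j ∈ range (2*k + r + 1),
        (if j ≤ 2*k + r then Ecoef (n - k) * ucoef (2*k + r - j) else 0) * f j
          = ∑ j ∈ range (2*n + r + 1),
        (if j ≤ 2*k + r then Ecoef (n - k) * ucoef (2*k + r - j) else 0) * f j := by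
      apply Finset.sum_subset (Finset.range_subset_range.2 (by omega))
      intro j _ hj
      rw [mem_range] at hj
      rw [if_neg (by omega), zero_mul]
    rw [← h1]
    refine Finset.sum_congr rfl (fun j hj => ?_)
    rw [mem_range] at hj
    rw [if_pos (by omega)]
    ring
  rw [Finset.sum_congr rfl expand, Finset.sum_comm]
  refine Finset.sum_congr rfl (fun j hj => ?_)
  rw [mem_range] at hj
  rw [← Finset.sum_mul, innerSumU n r j hr (by omega)]


noncomputable def wgt (n : ℕ) : ℝ := ((1:ℝ) + n) ^ ((3:ℝ)/2)
noncomputable def sgt (n : ℕ) : ℝ := ((1:ℝ) + n) ^ ((3:ℝ)/4)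

lemma base_pos (n : ℕ) : (0:ℝ) < 1 + n := by positivity
lemma wgt_pos (n : ℕ) : 0 < wgt n := Real.rpow_pos_of_pos (base_pos n) _
lemma sgt_pos (n : ℕ) : 0 < sgt n := Real.rpow_pos_of_pos (base_pos n) _

lemma sgt_sq (n : ℕ) : sgt n ^ 2 = wgt n := by
  unfold sgt wgt
  rw [← Real.rpow_natCast (((1:ℝ)+n) ^ ((3:ℝ)/4)) 2, ← Real.rpow_mul (base_pos n).le]
  norm_num

lemma summable_winv : Summable (fun n : ℕ => ((1:ℝ) + n) ^ (-(3:ℝ)/2)) := by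
  have h1 : Summable (fun n : ℕ => ((n:ℝ)) ^ (-(3:ℝ)/2)) := by
    apply Real.summable_nat_rpow.2; norm_num
  have h2 := (summable_nat_add_iff (f := fun n : ℕ => ((n:ℝ)) ^ (-(3:ℝ)/2)) 1).2 h1
  apply h2.congr
  intro n
  push_cast
  ring_nf

lemma ell1_of_wsq {f : ℕ → ℝ} (hf : Summable (fun n => wgt n * f n ^ 2)) :
    Summable (fun n => |f n|) := by
  have hsum : Summable (fun n : ℕ => (wgt n * f n ^ 2 + ((1:ℝ)+n) ^ (-(3:ℝ)/2)) / 2) :=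
    (hf.add summable_winv).div_const 2
  refine Summable.of_nonneg_of_le (fun n => abs_nonneg _) (fun n => ?_) hsum
  have hx := base_pos n
  have key : sgt n * ((1:ℝ)+n) ^ (-(3:ℝ)/4) = 1 := by
    unfold sgt
    rw [← Real.rpow_add hx]; norm_num
  have h1 : |f n| = (sgt n * |f n|) * (((1:ℝ)+n) ^ (-(3:ℝ)/4)) := by
    rw [mul_comm (sgt n) (|f n|), mul_assoc, key, mul_one]
  rw [h1]
  have hAM : (sgt n * |f n|) * (((1:ℝ)+n) ^ (-(3:ℝ)/4))
      ≤ ((sgt n * |f n|)^2 + (((1:ℝ)+n) ^ (-(3:ℝ)/4))^2) / 2 := by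
    nlinarith [sq_nonneg (sgt n * |f n| - ((1:ℝ)+n) ^ (-(3:ℝ)/4))]
  have e1 : (sgt n * |f n|)^2 = wgt n * f n ^ 2 := by
    rw [mul_pow, sgt_sq, sq_abs]
  have e2 : (((1:ℝ)+n) ^ (-(3:ℝ)/4))^2 = ((1:ℝ)+n) ^ (-(3:ℝ)/2) := by
    rw [← Real.rpow_natCast (((1:ℝ)+n) ^ (-(3:ℝ)/4)) 2, ← Real.rpow_mul hx.le]
    norm_num
  rw [e1, e2] at hAM
  exact hAM

lemma sgt_subadd {n j : ℕ} (hj : j ≤ n) : sgt n ≤ 2 * (sgt (n - j) + sgt j) := by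
  have hx := base_pos n
  have h1 : ((1:ℝ) + n) ≤ (1 + (n - j : ℕ)) + (1 + j) := by
    have : ((n - j : ℕ) : ℝ) = (n:ℝ) - j := by
      rw [Nat.cast_sub hj]
    rw [this]; push_cast; linarith
  rcases le_total ((1:ℝ) + (n - j : ℕ)) (1 + j) with hc | hc
  · have h2 : sgt n ≤ ((2:ℝ) * (1 + j)) ^ ((3:ℝ)/4) := by
      apply Real.rpow_le_rpow hx.le (by linarith) (by norm_num)
    have h3 : ((2:ℝ) * (1 + j)) ^ ((3:ℝ)/4) = 2 ^ ((3:ℝ)/4) * sgt j := by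
      rw [Real.mul_rpow (by norm_num) (base_pos j).le]; rfl
    have h4 : (2:ℝ) ^ ((3:ℝ)/4) ≤ 2 := by
      calc (2:ℝ) ^ ((3:ℝ)/4) ≤ 2 ^ (1:ℝ) := by
            apply Real.rpow_le_rpow_of_exponent_le (by norm_num) (by norm_num)
        _ = 2 := Real.rpow_one 2
    have h5 : sgt n ≤ 2 * sgt j := by
      calc sgt n ≤ 2 ^ ((3:ℝ)/4) * sgt j := by rw [← h3]; exact h2
        _ ≤ 2 * sgt j := by
            apply mul_le_mul_of_nonneg_right h4 (sgt_pos j).le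
    nlinarith [sgt_pos (n - j), sgt_pos j]
  · have h2 : sgt n ≤ ((2:ℝ) * (1 + (n - j : ℕ))) ^ ((3:ℝ)/4) := by
      apply Real.rpow_le_rpow hx.le (by linarith) (by norm_num)
    have h3 : ((2:ℝ) * (1 + (n - j:ℕ))) ^ ((3:ℝ)/4) = 2 ^ ((3:ℝ)/4) * sgt (n - j) := by
      rw [Real.mul_rpow (by norm_num) (base_pos (n - j)).le]; rfl
    have h4 : (2:ℝ) ^ ((3:ℝ)/4) ≤ 2 := by
      calc (2:ℝ) ^ ((3:ℝ)/4) ≤ 2 ^ (1:ℝ) := by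
            apply Real.rpow_le_rpow_of_exponent_le (by norm_num) (by norm_num)
        _ = 2 := Real.rpow_one 2
    have h5 : sgt n ≤ 2 * sgt (n - j) := by
      calc sgt n ≤ 2 ^ ((3:ℝ)/4) * sgt (n - j) := by rw [← h3]; exact h2
        _ ≤ 2 * sgt (n - j) := by
            apply mul_le_mul_of_nonneg_right h4 (sgt_pos _).le
    nlinarith [sgt_pos (n - j), sgt_pos j]

/-- summability of `n ↦ ∑_{j≤n} p (n-j) * q j` for summable nonneg p,q -/
lemma summable_conv {p q : ℕ → ℝ} (hp0 : ∀ n, 0 ≤ p n) (hq0 : ∀ n, 0 ≤ q n)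
    (hp : Summable p) (hq : Summable q) :
    Summable (fun n => ∑ j ∈ range (n+1), p (n - j) * q j) := by
  have hpn : Summable (fun x => ‖p x‖) :=
    hp.congr (fun n => by rw [Real.norm_eq_abs, abs_of_nonneg (hp0 n)])
  have hqn : Summable (fun x => ‖q x‖) :=
    hq.congr (fun n => by rw [Real.norm_eq_abs, abs_of_nonneg (hq0 n)])
  have h := summable_sum_mul_range_of_summable_norm' (f := p) (g := q) hpn hp hqn hq
  apply h.congr
  intro n
  have hrefl := Finset.sum_range_reflect (fun k => p k * q (n - k)) (n+1)
  simp only [Nat.add_sub_cancel] at hrefl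
  rw [← hrefl]
  refine Finset.sum_congr rfl (fun j hj => ?_)
  rw [mem_range] at hj
  have h2 : n - (n - j) = j := by omega
  rw [h2]

lemma conv_mem {a f : ℕ → ℝ}
    (ha : Summable (fun n => wgt n * a n ^ 2)) (hf : Summable (fun n => wgt n * f n ^ 2)) :
    Summable (fun n => wgt n * (∑ j ∈ range (n+1), a (n - j) * f j) ^ 2) := by
  have la : Summable (fun n => |a n|) := ell1_of_wsq ha
  have lf : Summable (fun n => |f n|) := ell1_of_wsq hf
  set Ta := ∑' n, |a n| with hTa
  set Tf := ∑' n, |f n| with hTf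
  have hTa0 : 0 ≤ Ta := tsum_nonneg (fun n => abs_nonneg _)
  have hTf0 : 0 ≤ Tf := tsum_nonneg (fun n => abs_nonneg _)
  -- majorant pieces
  set A2 : ℕ → ℝ := fun k => wgt k * a k ^ 2 with hA2
  set F2 : ℕ → ℝ := fun k => wgt k * f k ^ 2 with hF2
  have hA20 : ∀ k, 0 ≤ A2 k := fun k => mul_nonneg (wgt_pos k).le (sq_nonneg _)
  have hF20 : ∀ k, 0 ≤ F2 k := fun k => mul_nonneg (wgt_pos k).le (sq_nonneg _)
  set R : ℕ → ℝ := fun n => ∑ j ∈ range (n+1), A2 (n - j) * |f j| with hR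
  set R' : ℕ → ℝ := fun n => ∑ j ∈ range (n+1), |a (n - j)| * F2 j with hR'
  have hRsum : Summable R := summable_conv hA20 (fun n => abs_nonneg _) ha lf
  have hR'sum : Summable R' := by
    have := summable_conv (fun n => abs_nonneg (a n)) hF20 la hf
    exact this
  have hRsum0 : ∀ n, 0 ≤ R n := fun n => Finset.sum_nonneg
    (fun j _ => mul_nonneg (hA20 _) (abs_nonneg _))
  have hR'sum0 : ∀ n, 0 ≤ R' n := fun n => Finset.sum_nonneg
    (fun j _ => mul_nonneg (abs_nonneg _) (hF20 _))
  have hmaj : Summable (fun n => 8 * Tf * R n + 8 * Ta * R' n) :=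
    ((hRsum.mul_left _).add (hR'sum.mul_left _))
  refine Summable.of_nonneg_of_le
    (fun n => mul_nonneg (wgt_pos n).le (sq_nonneg _)) (fun n => ?_) hmaj
  set c : ℝ := ∑ j ∈ range (n+1), a (n - j) * f j with hc
  set P : ℝ := ∑ j ∈ range (n+1), (sgt (n - j) * |a (n - j)|) * |f j| with hP
  set Q : ℝ := ∑ j ∈ range (n+1), |a (n - j)| * (sgt j * |f j|) with hQ
  have hP0 : 0 ≤ P := Finset.sum_nonneg
    (fun j _ => mul_nonneg (mul_nonneg (sgt_pos _).le (abs_nonneg _)) (abs_nonneg _))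
  have hQ0 : 0 ≤ Q := Finset.sum_nonneg
    (fun j _ => mul_nonneg (abs_nonneg _) (mul_nonneg (sgt_pos _).le (abs_nonneg _)))
  -- step 1 : sgt n * |c| ≤ 2P + 2Q
  have step1 : sgt n * |c| ≤ 2 * P + 2 * Q := by
    have habs : |c| ≤ ∑ j ∈ range (n+1), |a (n - j)| * |f j| := by
      rw [hc]
      refine (Finset.abs_sum_le_sum_abs _ _).trans ?_
      refine le_of_eq (Finset.sum_congr rfl (fun j _ => abs_mul _ _))
    have h1 : sgt n * |c| ≤ ∑ j ∈ range (n+1), sgt n * (|a (n - j)| * |f j|) := by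
      rw [← Finset.mul_sum]
      exact mul_le_mul_of_nonneg_left habs (sgt_pos n).le
    refine h1.trans ?_
    have h2 : ∀ j ∈ range (n+1),
        sgt n * (|a (n - j)| * |f j|)
          ≤ 2 * ((sgt (n - j) * |a (n - j)|) * |f j|) + 2 * (|a (n - j)| * (sgt j * |f j|)) := by
      intro j hj
      rw [mem_range] at hj
      have hs := sgt_subadd (n := n) (j := j) (by omega)
      have := mul_le_mul_of_nonneg_right hs
        (mul_nonneg (abs_nonneg (a (n-j))) (abs_nonneg (f j)))
      calc sgt n * (|a (n - j)| * |f j|)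
          ≤ 2 * (sgt (n - j) + sgt j) * (|a (n - j)| * |f j|) := this
        _ = 2 * ((sgt (n - j) * |a (n - j)|) * |f j|) + 2 * (|a (n - j)| * (sgt j * |f j|)) := by
            ring
    calc (∑ j ∈ range (n+1), sgt n * (|a (n - j)| * |f j|))
        ≤ ∑ j ∈ range (n+1),
            (2 * ((sgt (n - j) * |a (n - j)|) * |f j|) + 2 * (|a (n - j)| * (sgt j * |f j|))) :=
          Finset.sum_le_sum h2
      _ = 2 * P + 2 * Q := by
          rw [Finset.sum_add_distrib, hP, hQ, Finset.mul_sum, Finset.mul_sum]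
  -- step 2 : P^2 ≤ Tf * R n
  have step2 : P ^ 2 ≤ Tf * R n := by
    have hCS := Finset.sum_mul_sq_le_sq_mul_sq (range (n+1))
      (fun j => Real.sqrt |f j|) (fun j => (sgt (n - j) * |a (n - j)|) * Real.sqrt |f j|)
    have he : ∀ j ∈ range (n+1),
        Real.sqrt |f j| * ((sgt (n - j) * |a (n - j)|) * Real.sqrt |f j|)
          = (sgt (n - j) * |a (n - j)|) * |f j| := by
      intro j _
      rw [← mul_assoc, mul_comm (Real.sqrt |f j|), mul_assoc, Real.mul_self_sqrt (abs_nonneg _)]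
    rw [Finset.sum_congr rfl he] at hCS
    have he2 : ∀ j ∈ range (n+1), (Real.sqrt |f j|) ^ 2 = |f j| := by
      intro j _; exact Real.sq_sqrt (abs_nonneg _)
    rw [Finset.sum_congr rfl he2] at hCS
    have he3 : ∀ j ∈ range (n+1),
        ((sgt (n - j) * |a (n - j)|) * Real.sqrt |f j|) ^ 2 = A2 (n - j) * |f j| := by
      intro j _
      rw [mul_pow, mul_pow, sgt_sq, sq_abs, Real.sq_sqrt (abs_nonneg _), hA2]
    rw [Finset.sum_congr rfl he3] at hCS
    refine hCS.trans ?_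
    apply mul_le_mul_of_nonneg_right _ (hRsum0 n)
    exact Summable.sum_le_tsum _ (fun j _ => abs_nonneg _) lf
  -- step 3 : Q^2 ≤ Ta * R' n
  have step3 : Q ^ 2 ≤ Ta * R' n := by
    have hCS := Finset.sum_mul_sq_le_sq_mul_sq (range (n+1))
      (fun j => Real.sqrt |a (n - j)|) (fun j => Real.sqrt |a (n - j)| * (sgt j * |f j|))
    have he : ∀ j ∈ range (n+1),
        Real.sqrt |a (n - j)| * (Real.sqrt |a (n - j)| * (sgt j * |f j|))
          = |a (n - j)| * (sgt j * |f j|) := by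
      intro j _
      rw [← mul_assoc, Real.mul_self_sqrt (abs_nonneg _)]
    rw [Finset.sum_congr rfl he] at hCS
    have he2 : ∀ j ∈ range (n+1), (Real.sqrt |a (n - j)|) ^ 2 = |a (n - j)| := by
      intro j _; exact Real.sq_sqrt (abs_nonneg _)
    rw [Finset.sum_congr rfl he2] at hCS
    have he3 : ∀ j ∈ range (n+1),
        (Real.sqrt |a (n - j)| * (sgt j * |f j|)) ^ 2 = |a (n - j)| * F2 j := by
      intro j _
      rw [mul_pow, mul_pow, sgt_sq, sq_abs, Real.sq_sqrt (abs_nonneg _), hF2]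
    rw [Finset.sum_congr rfl he3] at hCS
    refine hCS.trans ?_
    apply mul_le_mul_of_nonneg_right _ (hR'sum0 n)
    have hsub : ∑ j ∈ range (n+1), |a (n - j)| = ∑ j ∈ range (n+1), |a j| := by
      have hrefl := Finset.sum_range_reflect (fun k => |a k|) (n+1)
      simp only [Nat.add_sub_cancel] at hrefl
      rw [hrefl]
    rw [hsub]
    exact Summable.sum_le_tsum _ (fun j _ => abs_nonneg _) la
  -- finish
  have hwc : wgt n * c ^ 2 = (sgt n * |c|) ^ 2 := by
    rw [mul_pow, sgt_sq, sq_abs]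
  rw [hwc]
  have hsq : (sgt n * |c|) ^ 2 ≤ (2 * P + 2 * Q) ^ 2 := by
    apply pow_le_pow_left₀ (mul_nonneg (sgt_pos n).le (abs_nonneg _)) step1
  refine hsq.trans ?_
  nlinarith [step2, step3, sq_nonneg (P - Q), hP0, hQ0, hTf0, hTa0]

noncomputable def bcoef (m : ℕ) : ℝ := (-1)^m * ucoef m
lemma inEll2_iff (c : ℕ → ℝ) :
    InEll2 (3/4) c ↔ Summable (fun n => wgt n * c n ^ 2) := by
  unfold InEll2 wgt
  norm_num

lemma bcoef_sq (m : ℕ) : bcoef m ^ 2 = ucoef m ^ 2 := by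
  unfold bcoef
  rw [mul_pow, ← pow_mul, mul_comm m 2, pow_mul]
  norm_num

lemma bcoef_zero : bcoef 0 = 1 := by simp [bcoef, ucoef]

lemma bcoef_succ (m : ℕ) : bcoef (m+1) = Ecoef (m+1) - Ecoef m := by
  show (-1)^(m+1) * ((-1)^(m+1) * (Ecoef (m+1) - Ecoef m)) = _
  rw [← mul_assoc, ← pow_add, ← two_mul, pow_mul]
  norm_num

lemma ucoef_summable : Summable (fun n => wgt n * ucoef n ^ 2) := by
  have hmaj : Summable (fun n : ℕ => 3 * ((1:ℝ) + n) ^ (-(3:ℝ)/2)) := summable_winv.mul_left 3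
  refine Summable.of_nonneg_of_le (fun n => mul_nonneg (wgt_pos n).le (sq_nonneg _))
    (fun n => ?_) hmaj
  cases n with
  | zero =>
    have h1 : wgt 0 = 1 := by unfold wgt; norm_num
    have h2 : ((1:ℝ) + (0:ℕ)) ^ (-(3:ℝ)/2) = 1 := by norm_num
    rw [h1, h2]
    show (1:ℝ) * ucoef 0 ^ 2 ≤ 3 * 1
    rw [show ucoef 0 = 1 from rfl]
    norm_num
  | succ m =>
    set x : ℝ := (1:ℝ) + m with hx
    set y : ℝ := (1:ℝ) + (m+1 : ℕ) with hy
    have hx1 : (1:ℝ) ≤ x := by rw [hx]; push_cast; linarith [Nat.cast_nonneg (α := ℝ) m]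
    have hx0 : (0:ℝ) < x := by linarith
    have hy0 : (0:ℝ) < y := by rw [hy]; push_cast; linarith
    have hyx : y ≤ 2 * x := by rw [hy, hx]; push_cast; linarith
    -- ucoef (m+1) ^ 2 = Ecoef m ^2 / (2x)^2 ≤ 1/(4 x^3)
    have hu2 : ucoef (m+1) ^ 2 ≤ 1 / (4 * x^3) := by
      have hdiff : Ecoef (m+1) - Ecoef m = -(Ecoef m / (2*x)) := by
        have := Erec m
        have h2x : (2:ℝ)*x ≠ 0 := by positivity
        rw [hx]
        field_simp
        push_cast at this ⊢
        linarith
      have : ucoef (m+1) ^ 2 = (Ecoef m / (2*x))^2 := by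
        show ((-1)^(m+1) * (Ecoef (m+1) - Ecoef m))^2 = _
        rw [mul_pow, ← pow_mul, mul_comm (m+1) 2, pow_mul, hdiff]
        norm_num
      rw [this]
      have hE2 : Ecoef m ^ 2 ≤ 1 / x := by
        rw [le_div_iff₀ hx0]
        have h := Ecoef_sq m
        have hxe : ((m:ℝ) + 1) = x := by rw [hx]; ring
        rw [hxe] at h
        exact h
      rw [div_pow]
      rw [div_le_div_iff₀ (by positivity) (by positivity)]
      calc Ecoef m ^2 * (4 * x^3) ≤ (1/x) * (4 * x^3) := by
            apply mul_le_mul_of_nonneg_right hE2 (by positivity)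
        _ = 4 * x^2 := by field_simp
        _ ≤ (2*x)^2 := by nlinarith
        _ = 1 * (2*x)^2 := (one_mul _).symm
    -- wgt (m+1) * ucoef^2 ≤ 3 * y^{-3/2}
    show y ^ ((3:ℝ)/2) * ucoef (m+1) ^ 2 ≤ 3 * y ^ (-(3:ℝ)/2)
    have hyy : y ^ ((3:ℝ)/2) * y ^ ((3:ℝ)/2) = y ^ (3:ℕ) := by
      rw [← Real.rpow_add hy0, ← Real.rpow_natCast y 3]
      norm_num
    have hneg : y ^ (-(3:ℝ)/2) = (y ^ ((3:ℝ)/2))⁻¹ := by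
      rw [show (-(3:ℝ)/2) = -((3:ℝ)/2) by norm_num, Real.rpow_neg hy0.le]
    rw [hneg]
    have hs0 : (0:ℝ) < y ^ ((3:ℝ)/2) := Real.rpow_pos_of_pos hy0 _
    rw [show (3:ℝ) * (y ^ ((3:ℝ)/2))⁻¹ = 3 / (y ^ ((3:ℝ)/2)) from (div_eq_mul_inv 3 _).symm]
    rw [le_div_iff₀ hs0]
    have hy3 : y^(3:ℕ) ≤ 8 * x^3 := by
      have h := pow_le_pow_left₀ hy0.le hyx 3
      calc y^(3:ℕ) ≤ (2*x)^(3:ℕ) := h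
        _ = 8 * x^3 := by ring
    have hgoal : y ^ ((3:ℝ)/2) * ucoef (m+1) ^ 2 * y ^ ((3:ℝ)/2)
        = y^(3:ℕ) * ucoef (m+1)^2 := by
      rw [← hyy]; ring
    rw [hgoal]
    have hx3 : (0:ℝ) < 4 * x^3 := by positivity
    calc y^(3:ℕ) * ucoef (m+1)^2 ≤ (8 * x^3) * (1 / (4*x^3)) := by
          apply mul_le_mul (by exact hy3) hu2 (sq_nonneg _) (by positivity)
      _ = 2 := by field_simp; ring
      _ ≤ 3 := by norm_num

lemma bcoef_summable : Summable (fun n => wgt n * bcoef n ^ 2) :=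
  ucoef_summable.congr (fun n => by rw [bcoef_sq])

lemma wgt_mono {n m : ℕ} (h : n ≤ m) : wgt n ≤ wgt m := by
  unfold wgt
  have hc : (n:ℝ) ≤ m := Nat.cast_le.2 h
  apply Real.rpow_le_rpow (by positivity) (by linarith) (by norm_num)

/-- subsequence along an affine map stays summable -/
lemma sub_summable {c : ℕ → ℝ} (hc : Summable (fun n => wgt n * c n ^ 2))
    {φ : ℕ → ℕ} (hφ : Function.Injective φ) (hle : ∀ n, n ≤ φ n) :
    Summable (fun n => wgt n * c (φ n) ^ 2) := by
  have h1 : Summable ((fun n => wgt n * c n ^ 2) ∘ φ) := hc.comp_injective hφ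
  refine Summable.of_nonneg_of_le (fun n => mul_nonneg (wgt_pos n).le (sq_nonneg _))
    (fun n => ?_) h1
  exact mul_le_mul_of_nonneg_right (wgt_mono (hle n)) (sq_nonneg _)

/-- If `h ∈ ℋ` then the even part `(h_{2n})` and the odd part `(h_{2n+1})` belong to `ℋ`,
and the difference sequence `(h_{2n} - h_{2n+1})` belongs to `ℓ²_{3/4}`. -/
theorem stmt4 (h : ℕ → ℝ) (hh : InH h) :
    InH (fun n => h (2*n)) ∧ InH (fun n => h (2*n+1)) ∧
    InEll2 (3/4) (fun n => h (2*n) - h (2*n+1)) := by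
  obtain ⟨f, hf, hrep⟩ := hh
  rw [inEll2_iff] at hf
  -- full convolutions
  set cu : ℕ → ℝ := fun n => ∑ j ∈ range (n+1), ucoef (n - j) * f j with hcu
  set cb : ℕ → ℝ := fun n => ∑ j ∈ range (n+1), bcoef (n - j) * f j with hcb
  have hcusum : Summable (fun n => wgt n * cu n ^ 2) := conv_mem ucoef_summable hf
  have hcbsum : Summable (fun n => wgt n * cb n ^ 2) := conv_mem bcoef_summable hf
  refine ⟨⟨fun k => cu (2*k), ?_, ?_⟩, ⟨fun k => cu (2*k+1), ?_, ?_⟩, ?_⟩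
  · rw [inEll2_iff]
    exact sub_summable hcusum (fun a b hab => by have h' : 2*a = 2*b := hab; omega)
      (fun n => by show n ≤ 2*n; omega)
  · intro n
    have heq := rep n 0 (by norm_num) f
    simp only [add_zero] at heq
    show h (2*n) = ∑ k ∈ range (n+1), Ecoef (n - k) * cu (2*k)
    rw [hrep (2*n), ← heq]
  · rw [inEll2_iff]
    exact sub_summable hcusum (fun a b hab => by have h' : 2*a+1 = 2*b+1 := hab; omega)
      (fun n => by show n ≤ 2*n+1; omega)
  · intro n
    have heq := rep n 1 (by norm_num) f
    show h (2*n+1) = ∑ k ∈ range (n+1), Ecoef (n - k) * cu (2*k+1)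
    rw [hrep (2*n+1), ← heq]
  · -- difference
    have hdiff : ∀ n, h (2*n) - h (2*n+1) = -(cb (2*n+1)) := by
      intro n
      rw [hrep (2*n), hrep (2*n+1)]
      show _ = -(∑ j ∈ range (2*n+1+1), bcoef (2*n+1 - j) * f j)
      rw [Finset.sum_range_succ (f := fun j => Ecoef (2*n+1 - j) * f j),
          Finset.sum_range_succ (f := fun j => bcoef (2*n+1 - j) * f j)]
      have hb : ∀ j ∈ range (2*n+1), bcoef (2*n+1 - j) * f j
          = Ecoef (2*n+1 - j) * f j - Ecoef (2*n - j) * f j := by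
        intro j hj
        rw [mem_range] at hj
        have hj2 : 2*n+1 - j = (2*n - j) + 1 := by omega
        rw [hj2, bcoef_succ]
        ring
      rw [Finset.sum_congr rfl hb, Finset.sum_sub_distrib]
      simp only [Nat.sub_self, Ecoef_zero, bcoef_zero]
      ring
    rw [inEll2_iff]
    simp only [hdiff, neg_sq]
    exact sub_summable hcbsum (φ := fun n => 2*n+1)
      (fun a b hab => by have h' : 2*a+1 = 2*b+1 := hab; omega)
      (fun n => by show n ≤ 2*n+1; omega)
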